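/- arXiv:1709.03385 — 2 statements merged into one kernel-verified Lean document; each statement's English description precedes it below -/
import Mathlib

section
/- Let n ≥ 1 and let x > 1 have stopping time σ(x) = σ_n. If exactly n+1 indices s with 0 ≤ s ≤ κ(n) satisfy that T^s(x) is odd, then T^s(x) is even for every s with κ(n) < s < σ_n. -/
/-- The 3x+1 map: `T x = x/2` if `x` is even, `(3x+1)/2` if `x` is odd. -/
def T (x : ℕ) : ℕ := if x % 2 = 0 then x / 2 else (3 * x + 1) / 2

/-- The stopping time of `x`: the least `s ≥ 1` with `T^[s] x < x`. -/
noncomputable def stoppingTime (x : ℕ) : ℕ := sInf {s : ℕ | 1 ≤ s ∧ T^[s] x < x}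

/-- `σ_n = ⌊1 + (n+1)·log₂ 3⌋`. -/
noncomputable def sigmaN (n : ℕ) : ℕ := ⌊1 + ((n : ℝ) + 1) * Real.logb 2 3⌋₊

/-- `κ(n) = ⌊n·log₂ 3⌋`. -/
noncomputable def kappa (n : ℕ) : ℕ := ⌊(n : ℝ) * Real.logb 2 3⌋₊

/-! Each step multiplies by `1/2` or by a little more than `3/2`, so after `s` steps with `k` odd
ones `3^k x ≤ 2^s T^s(x)`. A drop below `x` at time `σ_n` thus forces `3^k < 2^{σ_n} ≤ 2·3^{n+1}`,
i.e. at most `n + 1` odd steps before `σ_n`; all of them are already spent up to `κ(n)`. -/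

lemma two_mul_T_of_even {y : ℕ} (h : y % 2 = 0) : 2 * T y = y := by
  simp only [T, if_pos h]
  omega

lemma two_mul_T_of_odd {y : ℕ} (h : y % 2 = 1) : 2 * T y = 3 * y + 1 := by
  simp only [T, if_neg (show y % 2 ≠ 0 by omega)]
  omega

def oddSteps (x s : ℕ) : Finset ℕ := (Finset.range s).filter (fun t => T^[t] x % 2 = 1)

lemma three_pow_card_oddSteps_mul_le (x s : ℕ) :
    3 ^ (oddSteps x s).card * x ≤ 2 ^ s * T^[s] x := by
  induction s with
  | zero => simp [oddSteps]
  | succ s ih =>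
    rw [oddSteps, Finset.range_add_one, Finset.filter_insert, Function.iterate_succ_apply',
      pow_succ, mul_assoc]
    split_ifs with h
    · rw [Finset.card_insert_of_notMem (by simp), pow_succ', mul_assoc, two_mul_T_of_odd h]
      calc 3 * (3 ^ (oddSteps x s).card * x) ≤ 3 * (2 ^ s * T^[s] x) := by gcongr
        _ ≤ 2 ^ s * (3 * T^[s] x + 1) := by
          rw [mul_add, mul_one, mul_left_comm]
          exact Nat.le_add_right _ _
    · rwa [two_mul_T_of_even (by omega)]

lemma three_pow_card_oddSteps_lt_of_iterate_lt {x s : ℕ} (h : T^[s] x < x) :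
    3 ^ (oddSteps x s).card < 2 ^ s := by
  have hlt : 2 ^ s * T^[s] x < 2 ^ s * x := by gcongr
  exact Nat.lt_of_mul_lt_mul_right ((three_pow_card_oddSteps_mul_le x s).trans_lt hlt)

lemma iterate_stoppingTime_lt {x : ℕ} (h : stoppingTime x ≠ 0) : T^[stoppingTime x] x < x := by
  have hne : {s : ℕ | 1 ≤ s ∧ T^[s] x < x}.Nonempty := by
    by_contra hempty
    rw [Set.not_nonempty_iff_eq_empty] at hempty
    exact h (by rw [stoppingTime, hempty, Nat.sInf_empty])
  exact (Nat.sInf_mem hne).2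

lemma logb_two_three_nonneg : 0 ≤ Real.logb 2 3 :=
  Real.logb_nonneg (by norm_num) (by norm_num)

lemma kappa_lt_sigmaN (n : ℕ) : kappa n < sigmaN n := by
  have hL := logb_two_three_nonneg
  rw [kappa, sigmaN, Nat.lt_iff_add_one_le, ← Nat.floor_add_one (by positivity)]
  apply Nat.floor_le_floor
  linarith [add_one_mul (n : ℝ) (Real.logb 2 3)]

lemma two_pow_sigmaN_le (n : ℕ) : 2 ^ sigmaN n ≤ 2 * 3 ^ (n + 1) := by
  have hσ : (sigmaN n : ℝ) ≤ 1 + (n + 1) * Real.logb 2 3 :=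
    Nat.floor_le (by have := logb_two_three_nonneg; positivity)
  have : (2 : ℝ) ^ (sigmaN n : ℝ) ≤ 2 * 3 ^ ((n : ℝ) + 1) :=
    calc (2 : ℝ) ^ (sigmaN n : ℝ) ≤ 2 ^ (1 + (n + 1) * Real.logb 2 3) :=
          Real.rpow_le_rpow_of_exponent_le (by norm_num) hσ
      _ = 2 * 3 ^ ((n : ℝ) + 1) := by
          rw [Real.rpow_add two_pos, Real.rpow_one, mul_comm ((n : ℝ) + 1),
            Real.rpow_mul zero_le_two, Real.rpow_logb two_pos (by norm_num) three_pos]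
  have hcast : ((2 ^ sigmaN n : ℕ) : ℝ) ≤ ((2 * 3 ^ (n + 1) : ℕ) : ℝ) := by
    push_cast
    rw [← Real.rpow_natCast, ← Real.rpow_natCast]
    push_cast
    exact this
  exact_mod_cast hcast

lemma card_oddSteps_sigmaN_le {n x : ℕ} (hstop : stoppingTime x = sigmaN n) :
    (oddSteps x (sigmaN n)).card ≤ n + 1 := by
  have hσ : stoppingTime x ≠ 0 := by
    have := kappa_lt_sigmaN n
    omega
  have hdrop : T^[sigmaN n] x < x := hstop ▸ iterate_stoppingTime_lt hσ
  have : 3 ^ (oddSteps x (sigmaN n)).card < 3 ^ (n + 2) :=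
    calc 3 ^ (oddSteps x (sigmaN n)).card < 2 ^ sigmaN n :=
          three_pow_card_oddSteps_lt_of_iterate_lt hdrop
      _ ≤ 2 * 3 ^ (n + 1) := two_pow_sigmaN_le n
      _ < 3 ^ (n + 2) := by
          rw [pow_succ 3 (n + 1)]
          have : 0 < 3 ^ (n + 1) := by positivity
          omega
  exact Nat.lt_succ_iff.mp ((Nat.pow_lt_pow_iff_right (by norm_num)).mp this)

theorem stmt9_general (n x : ℕ) (hstop : stoppingTime x = sigmaN n)
    (hcard : ((Finset.range (kappa n + 1)).filter (fun s => T^[s] x % 2 = 1)).card = n + 1) :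
    ∀ s : ℕ, kappa n < s → s < sigmaN n → T^[s] x % 2 = 0 := by
  change (oddSteps x (kappa n + 1)).card = n + 1 at hcard
  intro s hκs hsσ
  by_contra hodd
  have hsub : insert s (oddSteps x (kappa n + 1)) ⊆ oddSteps x (sigmaN n) := by
    intro t ht
    simp only [oddSteps, Finset.mem_insert, Finset.mem_filter, Finset.mem_range] at ht ⊢
    rcases ht with rfl | ⟨ht, htodd⟩
    · omega
    · exact ⟨by omega, htodd⟩
  have hs : s ∉ oddSteps x (kappa n + 1) := by
    simp only [oddSteps, Finset.mem_filter, Finset.mem_range, not_and]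
    omega
  have := Finset.card_le_card hsub
  rw [Finset.card_insert_of_notMem hs, hcard] at this
  have := card_oddSteps_sigmaN_le hstop
  omega

theorem stmt9 (n x : ℕ) (hn : 1 ≤ n) (hx : 1 < x) (hstop : stoppingTime x = sigmaN n)
    (hcard : ((Finset.range (kappa n + 1)).filter (fun s => T^[s] x % 2 = 1)).card = n + 1) :
    ∀ s : ℕ, kappa n < s → s < sigmaN n → T^[s] x % 2 = 0 :=
  stmt9_general n x hstop hcard
end

section
/- For every natural number n ≥ 1, z(n) = Σ_{k=n}^{κ(n)} R(k, n). -/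
/-- `m k x` is the number of indices `s` with `0 ≤ s < k` such that `T^[s] x` is odd. -/
def m (k x : ℕ) : ℕ := ((Finset.range k).filter (fun s => T^[s] x % 2 = 1)).card

/-- `R k n` is the number of residues `r ∈ {0,…,2^k − 1}` with `m k r = n` and
`3^(m j r) > 2^j` for all `1 ≤ j ≤ k`. -/
noncomputable def R (k n : ℕ) : ℕ :=
  {r : ℕ | r < 2 ^ k ∧ m k r = n ∧ ∀ j, 1 ≤ j → j ≤ k → 2 ^ j < 3 ^ (m j r)}.ncard

/-- `z n` is the number of residues `r < 2^(σ_n)` with `3^(m j r) > 2^j` for all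
`1 ≤ j < σ_n` and `m (σ_n) r = n + 1`. -/
noncomputable def z (n : ℕ) : ℕ :=
  {r : ℕ | r < 2 ^ sigmaN n ∧ (∀ j, 1 ≤ j → j < sigmaN n → 2 ^ j < 3 ^ (m j r)) ∧
    m (sigmaN n) r = n + 1}.ncard


/-!
Sort the residues counted by `z n` by the index `k < σ_n` of their last odd step. Then
`m_k(r) = n ≤ k`, the growth condition at `j = k` gives `k ≤ κ(n)`, and after `k` it holds
automatically, because `2^j < 3^(n+1)` exactly for `j < σ_n`. By Terras' theorem the parities of
`r, T r, …, T^(N-1) r` determine `r mod 2^N` and can be prescribed arbitrarily, so the residues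
`r < 2^σ_n` whose last odd step is at `k` correspond, via `r ↦ r mod 2^k`, to those counted by
`R k n`.
-/

open Finset

lemma ncard_setOf_lt_and (N : ℕ) (p : ℕ → Prop) [DecidablePred p] :
    {r | r < N ∧ p r}.ncard = #{r ∈ range N | p r} := by
  rw [← Set.ncard_coe_finset]
  congr 1
  ext r
  simp

lemma card_filter_exists_of_unique {ι α : Type*} [DecidableEq α] (s : Finset ι) (t : Finset α)
    (p : ι → α → Prop) [∀ i, DecidablePred (p i)] [DecidablePred fun a => ∃ i ∈ s, p i a]
    (h : ∀ a i j, p i a → p j a → i = j) :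
    #{a ∈ t | ∃ i ∈ s, p i a} = ∑ i ∈ s, #{a ∈ t | p i a} := by
  rw [← card_biUnion fun i _ j _ hij => disjoint_filter.mpr fun a _ hi hj => hij (h a i j hi hj)]
  congr 1
  ext a
  simp only [mem_filter, mem_biUnion]
  tauto

lemma T_add_two_mul (x a : ℕ) : T (x + 2 * a) = T x + (if x % 2 = 1 then 3 else 1) * a := by
  unfold T
  split_ifs <;> omega

lemma m_succ (k x : ℕ) : m (k + 1) x = m k x + if T^[k] x % 2 = 1 then 1 else 0 := by
  unfold m
  rw [range_add_one, filter_insert]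
  split_ifs
  · rw [card_insert_of_notMem (by simp)]
  · rfl

lemma m_succ' (k x : ℕ) : m (k + 1) x = x % 2 + m k (T x) := by
  induction k generalizing x with
  | zero =>
    rw [m_succ]
    simp only [m, range_zero, filter_empty, card_empty, Function.iterate_zero, id]
    rcases Nat.mod_two_eq_zero_or_one x with h | h <;> simp [h]
  | succ k ih => rw [m_succ, ih, m_succ, Function.iterate_succ_apply, add_assoc]

lemma m_le (k x : ℕ) : m k x ≤ k :=
  (card_filter_le _ _).trans (card_range k).le

lemma iterate_T_add_two_pow_mul (s x a : ℕ) :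
    T^[s] (x + 2 ^ s * a) = T^[s] x + 3 ^ m s x * a := by
  induction s generalizing x a with
  | zero => simp [m]
  | succ s ih =>
    rw [Function.iterate_succ_apply, Function.iterate_succ_apply, pow_succ', mul_assoc,
      T_add_two_mul, m_succ']
    rcases Nat.mod_two_eq_zero_or_one x with h | h
    · rw [if_neg (by omega), one_mul, ih, h, zero_add]
    · rw [if_pos h, show 3 * (2 ^ s * a) = 2 ^ s * (3 * a) by ring, ih, h]
      ring

lemma iterate_T_add_two_pow_mul_mod_two (N r q : ℕ) :
    T^[N] (r + 2 ^ N * q) % 2 = (T^[N] r + q) % 2 := by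
  have h3 : 3 ^ m N r % 2 = 1 := by simp [Nat.pow_mod]
  simp [iterate_T_add_two_pow_mul, Nat.add_mod, Nat.mul_mod, h3]

lemma iterate_T_add_two_pow_mul_mod_two_of_lt {s k : ℕ} (hs : s < k) (x a : ℕ) :
    T^[s] (x + 2 ^ k * a) % 2 = T^[s] x % 2 := by
  have h : 2 ^ k * a = 2 ^ s * (2 * (2 ^ (k - s - 1) * a)) := by
    rw [← mul_assoc, ← mul_assoc, ← pow_succ, ← pow_add]
    congr 2
    omega
  rw [h, iterate_T_add_two_pow_mul_mod_two, Nat.add_mul_mod_self_left]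

lemma iterate_T_mod_two_pow_mod_two {s k : ℕ} (hs : s < k) (x : ℕ) :
    T^[s] (x % 2 ^ k) % 2 = T^[s] x % 2 := by
  conv_rhs => rw [← Nat.mod_add_div x (2 ^ k)]
  rw [iterate_T_add_two_pow_mul_mod_two_of_lt hs]

lemma m_mod_two_pow {j k : ℕ} (hj : j ≤ k) (x : ℕ) : m j (x % 2 ^ k) = m j x := by
  unfold m
  congr 1
  refine filter_congr fun s hs => ?_
  rw [iterate_T_mod_two_pow_mod_two (by simp at hs; omega)]

theorem eq_of_iterate_T_mod_two_eq {N x y : ℕ} (hx : x < 2 ^ N) (hy : y < 2 ^ N)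
    (h : ∀ s < N, T^[s] x % 2 = T^[s] y % 2) : x = y := by
  induction N generalizing x y with
  | zero => simp at hx hy; omega
  | succ N ih =>
    have hmod : x % 2 ^ N = y % 2 ^ N :=
      ih (Nat.mod_lt _ (by positivity)) (Nat.mod_lt _ (by positivity)) fun s hs => by
        rw [iterate_T_mod_two_pow_mod_two hs, iterate_T_mod_two_pow_mod_two hs]
        exact h s (by omega)
    have hdiv : x / 2 ^ N = y / 2 ^ N := by
      have hxq : x / 2 ^ N < 2 := Nat.div_lt_of_lt_mul (by rwa [← pow_succ])
      have hyq : y / 2 ^ N < 2 := Nat.div_lt_of_lt_mul (by rwa [← pow_succ])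
      have hN := h N (by omega)
      rw [← Nat.mod_add_div x (2 ^ N), ← Nat.mod_add_div y (2 ^ N), hmod,
        iterate_T_add_two_pow_mul_mod_two, iterate_T_add_two_pow_mul_mod_two] at hN
      generalize x / 2 ^ N = qx at *
      generalize y / 2 ^ N = qy at *
      omega
    rw [← Nat.mod_add_div x (2 ^ N), ← Nat.mod_add_div y (2 ^ N), hmod, hdiv]

theorem exists_iterate_T_mod_two_eq (N : ℕ) (b : ℕ → ℕ) :
    ∃ x < 2 ^ N, ∀ s < N, T^[s] x % 2 = b s % 2 := by
  induction N with
  | zero => exact ⟨0, by simp, by simp⟩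
  | succ N ih =>
    obtain ⟨x, hx, hb⟩ := ih
    have hq : 2 ^ N * ((b N + T^[N] x) % 2) ≤ 2 ^ N * 1 :=
      Nat.mul_le_mul_left _ (by omega)
    refine ⟨x + 2 ^ N * ((b N + T^[N] x) % 2), by rw [pow_succ]; omega, fun s hs => ?_⟩
    rcases Nat.lt_succ_iff_lt_or_eq.mp hs with hs | rfl
    · rw [iterate_T_add_two_pow_mul_mod_two_of_lt hs, hb s hs]
    · rw [iterate_T_add_two_pow_mul_mod_two]
      omega

def IsLastOddIndex (N k x : ℕ) : Prop :=
  k < N ∧ T^[k] x % 2 = 1 ∧ ∀ j, k < j → j < N → T^[j] x % 2 = 0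

lemma exists_isLastOddIndex {N x : ℕ} (h : 0 < m N x) : ∃ k, IsLastOddIndex N k x := by
  induction N with
  | zero => simp [m] at h
  | succ N ih =>
    by_cases hN : T^[N] x % 2 = 1
    · exact ⟨N, by omega, hN, fun j h1 h2 => by omega⟩
    · rw [m_succ, if_neg hN] at h
      obtain ⟨k, hkN, hk, heven⟩ := ih (by simpa using h)
      refine ⟨k, by omega, hk, fun j h1 h2 => ?_⟩
      rcases Nat.lt_succ_iff_lt_or_eq.mp h2 with h2 | rfl
      · exact heven j h1 h2
      · omega

lemma IsLastOddIndex.m_eq {N k x : ℕ} (h : IsLastOddIndex N k x) {j : ℕ} (hkj : k < j)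
    (hjN : j ≤ N) : m j x = m k x + 1 := by
  induction j, hkj using Nat.le_induction with
  | base => rw [m_succ, if_pos h.2.1]
  | succ j hkj ih => rw [m_succ, if_neg (by rw [h.2.2 j hkj (by omega)]; omega), ih (by omega)]

lemma IsLastOddIndex.unique {N k k' x : ℕ} (h : IsLastOddIndex N k x)
    (h' : IsLastOddIndex N k' x) : k = k' := by
  by_contra hne
  rcases Nat.lt_or_gt_of_ne hne with hlt | hlt
  · have := h.2.2 k' hlt h'.1; have := h'.2.1; omega
  · have := h'.2.2 k hlt h.1; have := h.2.1; omega

open scoped Classical in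
theorem card_filter_isLastOddIndex {k N : ℕ} (hkN : k < N) (P : ℕ → Prop) [DecidablePred P] :
    #{x ∈ range (2 ^ N) | P (x % 2 ^ k) ∧ IsLastOddIndex N k x} =
      #{r ∈ range (2 ^ k) | P r} := by
  refine card_nbij (· % 2 ^ k) (fun x hx => ?_) (fun x hx y hy hxy => ?_) (fun r hr => ?_)
  · simp only [coe_filter, mem_range, Set.mem_ofPred_eq] at hx ⊢
    exact ⟨Nat.mod_lt _ (by positivity), hx.2.1⟩
  · simp only [coe_filter, mem_range, Set.mem_ofPred_eq] at hx hy hxy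
    refine eq_of_iterate_T_mod_two_eq hx.1 hy.1 fun s hs => ?_
    obtain ⟨-, -, -, hxk, hxe⟩ := hx
    obtain ⟨-, -, -, hyk, hye⟩ := hy
    rcases lt_trichotomy s k with hsk | rfl | hsk
    · rw [← iterate_T_mod_two_pow_mod_two hsk, hxy, iterate_T_mod_two_pow_mod_two hsk]
    · rw [hxk, hyk]
    · rw [hxe s hsk hs, hye s hsk hs]
  · simp only [coe_filter, mem_range, Set.mem_ofPred_eq] at hr ⊢
    obtain ⟨x, hx, hb⟩ := exists_iterate_T_mod_two_eq N
      fun s => if s < k then T^[s] r else if s = k then 1 else 0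
    have hxr : x % 2 ^ k = r := eq_of_iterate_T_mod_two_eq (Nat.mod_lt _ (by positivity)) hr.1
      fun s hs => by rw [iterate_T_mod_two_pow_mod_two hs, hb s (by omega), if_pos hs]
    refine ⟨x, ⟨hx, hxr ▸ hr.2, hkN, ?_, fun j hkj hjN => ?_⟩, hxr⟩
    · simpa using hb k hkN
    · simpa [hkj.ne', hkj.not_gt] using hb j hjN

lemma logb_two_three_pos : 0 < Real.logb 2 3 :=
  Real.logb_pos (by norm_num) (by norm_num)

lemma two_pow_lt_three_pow_iff_le_kappa {n : ℕ} (hn : 1 ≤ n) (k : ℕ) :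
    2 ^ k < 3 ^ n ↔ k ≤ kappa n := by
  have hne : 2 ^ k ≠ 3 ^ n := by
    rcases k with _ | k
    · exact (Nat.one_lt_pow (by omega) (by norm_num)).ne
    · have h3 : 3 ^ n % 2 = 1 := by simp [Nat.pow_mod]
      rw [pow_succ]
      omega
  have hreal : 2 ^ k ≤ 3 ^ n ↔ (k : ℝ) ≤ n * Real.logb 2 3 := by
    rw [← Real.logb_pow, Real.le_logb_iff_rpow_le (by norm_num) (by positivity),
      Real.rpow_natCast]
    exact_mod_cast Iff.rfl
  rw [kappa, Nat.le_floor_iff (by have := logb_two_three_pos; positivity), ← hreal, hne.le_iff_lt]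

lemma sigmaN_eq_kappa_add_one (n : ℕ) : sigmaN n = kappa (n + 1) + 1 := by
  rw [sigmaN, kappa, add_comm, Nat.floor_add_one (by have := logb_two_three_pos; positivity)]
  push_cast
  rfl

lemma kappa_mono : Monotone kappa := fun _ _ h =>
  Nat.floor_mono (mul_le_mul_of_nonneg_right (by exact_mod_cast h)
    logb_two_three_pos.le)

lemma lt_sigmaN_of_le_kappa {n k : ℕ} (hk : k ≤ kappa n) : k < sigmaN n := by
  have : kappa n ≤ kappa (n + 1) := kappa_mono n.le_succ
  rw [sigmaN_eq_kappa_add_one]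
  omega

theorem z_condition_iff {n : ℕ} (hn : 1 ≤ n) (r : ℕ) :
    ((∀ j, 1 ≤ j → j < sigmaN n → 2 ^ j < 3 ^ m j r) ∧ m (sigmaN n) r = n + 1) ↔
      ∃ k ∈ Icc n (kappa n), (m k (r % 2 ^ k) = n ∧
        ∀ j, 1 ≤ j → j ≤ k → 2 ^ j < 3 ^ m j (r % 2 ^ k)) ∧ IsLastOddIndex (sigmaN n) k r := by
  simp only [mem_Icc, m_mod_two_pow le_rfl]
  constructor
  · rintro ⟨hgrow, hm⟩
    obtain ⟨k, hlast⟩ := exists_isLastOddIndex (N := sigmaN n) (x := r) (by omega)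
    have hmk : m k r = n := by have := hlast.m_eq hlast.1 le_rfl; omega
    have hnk : n ≤ k := hmk ▸ m_le k r
    refine ⟨k, ⟨hnk, ?_⟩, ⟨hmk, fun j hj hjk => ?_⟩, hlast⟩
    · rw [← two_pow_lt_three_pow_iff_le_kappa hn, ← hmk]
      exact hgrow k (by omega) hlast.1
    · rw [m_mod_two_pow hjk]
      exact hgrow j hj (by have := hlast.1; omega)
  · rintro ⟨k, ⟨-, hk⟩, ⟨hmk, hgrow⟩, hlast⟩
    refine ⟨fun j hj hjσ => ?_, by rw [hlast.m_eq hlast.1 le_rfl, hmk]⟩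
    rcases le_or_gt j k with hjk | hkj
    · rw [← m_mod_two_pow hjk]
      exact hgrow j hj hjk
    · rw [hlast.m_eq hkj hjσ.le, hmk, two_pow_lt_three_pow_iff_le_kappa (by omega)]
      rw [sigmaN_eq_kappa_add_one] at hjσ
      omega

theorem stmt16 (n : ℕ) (hn : 1 ≤ n) :
    z n = ∑ k ∈ Finset.Icc n (kappa n), R k n := by
  classical
  rw [z, ncard_setOf_lt_and, filter_congr fun r _ => z_condition_iff hn r,
    card_filter_exists_of_unique _ _ _ fun r k k' hk hk' => hk.2.unique hk'.2]
  refine sum_congr rfl fun k hk => ?_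
  rw [R, ncard_setOf_lt_and]
  exact card_filter_isLastOddIndex (lt_sigmaN_of_le_kappa (mem_Icc.mp hk).2)
    (fun r => m k r = n ∧ ∀ j, 1 ≤ j → j ≤ k → 2 ^ j < 3 ^ m j r)
end
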